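/- arXiv:1503.00312 — 2 statements merged into one kernel-verified Lean document; each statement's English description precedes it below -/
import Mathlib

section
/- Let α, a, b, c be real numbers and let A be the 3×3 real matrix A = [[0,αa,αb],[0,-αc,0],[0,0,-αc]] (whose trace is -2αc). If αc ≠ 0, then exp(A) = 1 + ((1 - e^{-αc})/(αc)) • A. -/
/-!
If `x * x = t • x` then `x` acts on `x` by the scalar `t` and on `t • 1 - x` by `0`, so from the
exponential series `exp x * x = exp t • x` and `exp x * (t • 1 - x) = t • 1 - x`. Adding these gives
`t • exp x = t • 1 + (exp t - 1) • x`. The F₅ matrix satisfies `A * A = -(α c) • A`.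
-/

open NormedSpace

theorem pow_mul_eq_smul_of_mul_eq_smul {R 𝔸 : Type*} [CommSemiring R] [Semiring 𝔸] [Algebra R 𝔸]
    {x v : 𝔸} {c : R} (h : x * v = c • v) (n : ℕ) : x ^ n * v = c ^ n • v := by
  induction n with
  | zero => simp
  | succ n ih => rw [pow_succ', mul_assoc, ih, mul_smul_comm, h, smul_smul, pow_succ]

section RCLike

variable {𝕂 𝔸 : Type*} [RCLike 𝕂] [NormedRing 𝔸] [NormedAlgebra 𝕂 𝔸] [CompleteSpace 𝔸]

theorem exp_mul_eq_smul_of_mul_eq_smul {x v : 𝔸} {c : 𝕂} (h : x * v = c • v) :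
    exp x * v = exp c • v := by
  have hx : HasSum (fun n => ((n.factorial⁻¹ : 𝕂) • x ^ n) * v) (exp x * v) :=
    (exp_series_hasSum_exp' x).mul_right v
  have hc : HasSum (fun n => ((n.factorial⁻¹ : 𝕂) • c ^ n) • v) (exp c • v) :=
    (exp_series_hasSum_exp' c).smul_const v
  refine hx.unique (hc.congr_fun fun n => ?_)
  rw [smul_mul_assoc, pow_mul_eq_smul_of_mul_eq_smul h, smul_smul, smul_eq_mul]

theorem exp_eq_one_add_smul_of_mul_self_eq_smul {x : 𝔸} {t : 𝕂} (h : x * x = t • x) (ht : t ≠ 0) :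
    exp x = 1 + ((exp t - 1) / t) • x := by
  have hx : exp x * x = exp t • x := exp_mul_eq_smul_of_mul_eq_smul h
  have hker : exp x * (t • 1 - x) = t • 1 - x := by
    have h0 : x * (t • 1 - x) = (0 : 𝕂) • (t • 1 - x) := by
      rw [mul_sub, h, mul_smul_comm, mul_one, sub_self, zero_smul]
    rw [exp_mul_eq_smul_of_mul_eq_smul h0, exp_zero, one_smul]
  apply smul_right_injective 𝔸 ht
  calc t • exp x = exp x * (t • 1 - x) + exp x * x := by
        rw [← mul_add, sub_add_cancel, mul_smul_comm, mul_one]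
    _ = t • (1 + ((exp t - 1) / t) • x) := by
        rw [hker, hx, smul_add, smul_smul, mul_div_cancel₀ _ ht, sub_smul, one_smul]
        abel

end RCLike

theorem Matrix.mul_self_eq_smul_fin_three {R : Type*} [CommRing R] (p q r : R) :
    !![0, p, q; 0, r, 0; 0, 0, r] * !![0, p, q; 0, r, 0; 0, 0, r] =
      r • !![0, p, q; 0, r, 0; 0, 0, r] := by
  ext i j
  fin_cases i <;> fin_cases j <;> simp <;> ring

attribute [local instance] Matrix.linftyOpNormedRing Matrix.linftyOpNormedAlgebra

theorem F5_exp_of_ne_zero (α a b c : ℝ)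
    (A : Matrix (Fin 3) (Fin 3) ℝ)
    (hA : A = !![0, α * a, α * b; 0, -(α * c), 0; 0, 0, -(α * c)])
    (h : α * c ≠ 0) :
    NormedSpace.exp A =
      1 + ((1 - Real.exp (-(α * c))) / (α * c)) • A := by
  have hsq : A * A = (-(α * c)) • A := hA ▸ Matrix.mul_self_eq_smul_fin_three _ _ _
  have hexp := exp_eq_one_add_smul_of_mul_self_eq_smul hsq (neg_ne_zero.mpr h)
  rw [← Real.exp_eq_exp_ℝ, div_neg, ← neg_div, neg_sub] at hexp
  -- `exact`, not `rw`: the norm topology on matrices agrees with the statement's only up to defeq.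
  exact hexp
end

section
/- Let α, a, b, c be real numbers, set Δ = 2a² - 2b² + c², and let A be the 3×3 real matrix A = [[0,αb,αa],[-2αb,0,-αc],[2αa,-αc,0]] (so tr(A²) = 2α²Δ). If α²Δ < 0 and θ = √(-α²Δ), then exp(A) = 1 + (sin(θ)/θ) • A + ((1 - cos(θ))/θ²) • A². -/
/-!
By Cayley–Hamilton, the traceless singular matrix `A` satisfies `A³ = ½ tr(A²) • A = -θ² • A`.
Hence `A^(2k+1) = (-θ²)^k • A` and `A^(2k+2) = (-θ²)^k • A²`, so the odd part of the exponential
series is the sine series of `θ` scaled by `A / θ`, and the even part beyond the constant term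
is `1 - cos θ` scaled by `A² / θ²`.
-/

open NormedSpace Real
open scoped Nat

section PowThree

variable {R 𝔸 : Type*} [CommSemiring R] [Semiring 𝔸] [Algebra R 𝔸] {q : R} {x : 𝔸}

theorem pow_two_mul_add_one_of_pow_three_eq_smul (h : x ^ 3 = q • x) (k : ℕ) :
    x ^ (2 * k + 1) = q ^ k • x := by
  induction k with
  | zero => simp
  | succ k ih =>
    rw [show 2 * (k + 1) + 1 = 2 * k + 1 + 2 by ring, pow_add, ih, smul_mul_assoc,
      ← pow_succ', h, smul_smul, ← pow_succ]

theorem pow_two_mul_add_two_of_pow_three_eq_smul (h : x ^ 3 = q • x) (k : ℕ) :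
    x ^ (2 * k + 2) = q ^ k • x ^ 2 := by
  rw [pow_succ, pow_two_mul_add_one_of_pow_three_eq_smul h, smul_mul_assoc, ← sq]

end PowThree

section RodriguesFormula

variable {𝔸 : Type*} [Ring 𝔸] [Algebra ℝ 𝔸] [TopologicalSpace 𝔸] [ContinuousSMul ℝ 𝔸]
  {θ : ℝ} {x : 𝔸}

theorem hasSum_odd_exp_terms_of_pow_three_eq_neg_sq_smul (hθ : θ ≠ 0)
    (h : x ^ 3 = (-θ ^ 2) • x) :
    HasSum (fun k : ℕ => ((2 * k + 1)! : ℝ)⁻¹ • x ^ (2 * k + 1)) ((sin θ / θ) • x) := by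
  convert ((hasSum_sin θ).div_const θ).smul_const x using 2 with k
  rw [pow_two_mul_add_one_of_pow_three_eq_smul h, smul_smul, neg_pow, ← pow_mul]
  congr 1
  field_simp
  ring

theorem hasSum_even_exp_terms_of_pow_three_eq_neg_sq_smul [IsTopologicalAddGroup 𝔸]
    (hθ : θ ≠ 0) (h : x ^ 3 = (-θ ^ 2) • x) :
    HasSum (fun k : ℕ => ((2 * k)! : ℝ)⁻¹ • x ^ (2 * k))
      (1 + ((1 - cos θ) / θ ^ 2) • x ^ 2) := by
  have hcos : HasSum (fun k : ℕ => (-1) ^ (k + 1) * θ ^ (2 * (k + 1)) / (2 * (k + 1))!)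
      (cos θ - 1) := by
    simpa using (hasSum_nat_add_iff' 1).mpr (hasSum_cos θ)
  have hsucc : HasSum (fun k : ℕ => ((2 * (k + 1))! : ℝ)⁻¹ • x ^ (2 * (k + 1)))
      (((1 - cos θ) / θ ^ 2) • x ^ 2) := by
    rw [← neg_sub]
    refine ((hcos.neg.div_const (θ ^ 2)).smul_const (x ^ 2)).congr_fun fun k => ?_
    rw [show 2 * (k + 1) = 2 * k + 2 by ring, pow_two_mul_add_two_of_pow_three_eq_smul h,
      smul_smul, neg_pow, ← pow_mul]
    congr 1
    field_simp
    ring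
  simpa using HasSum.zero_add (f := fun k : ℕ => ((2 * k)! : ℝ)⁻¹ • x ^ (2 * k)) hsucc

theorem exp_eq_of_pow_three_eq_neg_sq_smul [IsTopologicalRing 𝔸] [T2Space 𝔸]
    (hθ : θ ≠ 0) (h : x ^ 3 = (-θ ^ 2) • x) :
    exp x = 1 + (sin θ / θ) • x + ((1 - cos θ) / θ ^ 2) • x ^ 2 := by
  rw [exp_eq_tsum ℝ, add_right_comm]
  exact (HasSum.even_add_odd (f := fun n : ℕ => (n ! : ℝ)⁻¹ • x ^ n)
    (hasSum_even_exp_terms_of_pow_three_eq_neg_sq_smul hθ h)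
    (hasSum_odd_exp_terms_of_pow_three_eq_neg_sq_smul hθ h)).tsum_eq

end RodriguesFormula

theorem F8_matrix_pow_three (α a b c : ℝ) :
    !![0, α * b, α * a; -(2 * α * b), 0, -(α * c); 2 * α * a, -(α * c), 0] ^ 3 =
      (α ^ 2 * (2 * a ^ 2 - 2 * b ^ 2 + c ^ 2)) •
        !![0, α * b, α * a; -(2 * α * b), 0, -(α * c); 2 * α * a, -(α * c), 0] := by
  rw [pow_three]
  ext i j
  fin_cases i <;> fin_cases j <;> simp [Matrix.mul_apply, Fin.sum_univ_three] <;> ring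

theorem F8_exp_of_neg (α a b c Δ θ : ℝ)
    (hΔ : Δ = 2 * a ^ 2 - 2 * b ^ 2 + c ^ 2)
    (A : Matrix (Fin 3) (Fin 3) ℝ)
    (hA : A = !![0, α * b, α * a; -(2 * α * b), 0, -(α * c); 2 * α * a, -(α * c), 0])
    (h : α ^ 2 * Δ < 0)
    (hθ : θ = Real.sqrt (-(α ^ 2 * Δ))) :
    NormedSpace.exp A =
      1 + (Real.sin θ / θ) • A + ((1 - Real.cos θ) / θ ^ 2) • A ^ 2 := by
  have hθ_sq : θ ^ 2 = -(α ^ 2 * Δ) := by rw [hθ, sq_sqrt (by linarith)]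
  have hθ_ne : θ ≠ 0 := by
    rintro rfl
    linarith
  have hA_cube : A ^ 3 = (-θ ^ 2) • A := by
    rw [hθ_sq, neg_neg, hΔ, hA]
    exact F8_matrix_pow_three α a b c
  exact exp_eq_of_pow_three_eq_neg_sq_smul hθ_ne hA_cube
end
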